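/- arXiv:2304.06453 — 4 statements merged into one kernel-verified Lean document; each statement's English description precedes it below -/
import Mathlib

section
/- Every finite simple connected graph that contains at least one median-consistent vertex contains no induced subgraph isomorphic to the complete bipartite graph K_{3,3}. -/
open SimpleGraph

/-- `z` lies on some shortest path connecting `u` and `v` in the graph `G`,
i.e. `z ∈ I(u,v)`. -/
def OnShortestPath {V : Type*} (G : SimpleGraph V) (u v z : V) : Prop :=
  ∃ p : G.Walk u v, p.length = G.dist u v ∧ z ∈ p.support

/-- `m` is a median point of the triple `u, v, w`, i.e. `m ∈ I(u,v) ∩ I(u,w) ∩ I(v,w)`. -/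
def IsMedianPt {V : Type*} (G : SimpleGraph V) (u v w m : V) : Prop :=
  OnShortestPath G u v m ∧ OnShortestPath G u w m ∧ OnShortestPath G v w m

/-- `μ` is a median-consistent (medico) vertex of `G`:
`|I(μ,v,w)| = 1` for all vertices `v, w`. -/
def Medico {V : Type*} (G : SimpleGraph V) (μ : V) : Prop :=
  ∀ v w : V, ∃! m : V, IsMedianPt G μ v w m

/-- `G` contains an induced copy of the graph `H`. -/
def HasInducedCopy {W V : Type*} (H : SimpleGraph W) (G : SimpleGraph V) : Prop :=
  ∃ f : W ↪ V, ∀ a b : W, H.Adj a b ↔ G.Adj (f a) (f b)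

lemma onShortestPath_iff {V : Type*} {G : SimpleGraph V} (hconn : G.Connected) (u v z : V) :
    OnShortestPath G u v z ↔ G.dist u z + G.dist z v = G.dist u v := by
  classical
  constructor
  · rintro ⟨p, hlen, hz⟩
    have h1 : G.dist u z ≤ (p.takeUntil z hz).length := SimpleGraph.dist_le _
    have h2 : G.dist z v ≤ (p.dropUntil z hz).length := SimpleGraph.dist_le _
    have h3 : (p.takeUntil z hz).length + (p.dropUntil z hz).length = p.length := by
      rw [← SimpleGraph.Walk.length_append, p.take_spec hz]
    have h4 := hconn.dist_triangle (u := u) (v := z) (w := v)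
    omega
  · intro h
    obtain ⟨p, hp⟩ := hconn.exists_walk_length_eq_dist u z
    obtain ⟨q, hq⟩ := hconn.exists_walk_length_eq_dist z v
    exact ⟨p.append q, by rw [SimpleGraph.Walk.length_append, hp, hq, h],
      by rw [SimpleGraph.Walk.mem_support_append_iff]; exact Or.inl p.end_mem_support⟩

lemma isMedianPt_iff {V : Type*} {G : SimpleGraph V} (hconn : G.Connected) (u v w m : V) :
    IsMedianPt G u v w m ↔
      G.dist u m + G.dist m v = G.dist u v ∧
      G.dist u m + G.dist m w = G.dist u w ∧
      G.dist v m + G.dist m w = G.dist v w := by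
  unfold IsMedianPt
  rw [onShortestPath_iff hconn, onShortestPath_iff hconn, onShortestPath_iff hconn]

/-- For adjacent vertices, the distance from a medico vertex differs by exactly 1. -/
lemma medico_step {V : Type*} {G : SimpleGraph V} (hconn : G.Connected) {μ x y : V}
    (hμ : Medico G μ) (hxy : G.Adj x y) :
    G.dist μ x + 1 = G.dist μ y ∨ G.dist μ y + 1 = G.dist μ x := by
  obtain ⟨m, hm, -⟩ := hμ x y
  rw [isMedianPt_iff hconn] at hm
  obtain ⟨h1, h2, h3⟩ := hm
  have hd1 : G.dist x y = 1 := SimpleGraph.dist_eq_one_iff_adj.mpr hxy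
  have hc1 : G.dist x m = G.dist m x := SimpleGraph.dist_comm
  rcases Nat.eq_zero_or_pos (G.dist x m) with h | h
  · have hxm0 : x = m := hconn.dist_eq_zero_iff.mp h
    subst hxm0
    left; omega
  · have hmy : G.dist m y = 0 := by omega
    have hmy0 : m = y := hconn.dist_eq_zero_iff.mp hmy
    subst hmy0
    right; omega

/-- Two distinct common neighbors both one step closer to μ give two medians: contradiction. -/
lemma medico_key {V : Type*} {G : SimpleGraph V} (hconn : G.Connected) {μ x y c c' : V}
    (hμ : Medico G μ) (hcc : c ≠ c') (hxy : ¬ G.Adj x y) (hne : x ≠ y)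
    (hcx : G.Adj c x) (hcy : G.Adj c y) (hcx' : G.Adj c' x) (hcy' : G.Adj c' y)
    (hdc : G.dist μ c + 1 = G.dist μ x) (hdc' : G.dist μ c' + 1 = G.dist μ x)
    (hdxy : G.dist μ x = G.dist μ y) : False := by
  have d2 : G.dist x y = 2 := by
    have hle : G.dist x y ≤ 2 := by
      have := hconn.dist_triangle (u := x) (v := c) (w := y)
      have h1 : G.dist x c = 1 := SimpleGraph.dist_eq_one_iff_adj.mpr hcx.symm
      have h2 : G.dist c y = 1 := SimpleGraph.dist_eq_one_iff_adj.mpr hcy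
      omega
    have h0 : G.dist x y ≠ 0 := fun h => hne (hconn.dist_eq_zero_iff.mp h)
    have h1 : G.dist x y ≠ 1 := fun h => hxy (SimpleGraph.dist_eq_one_iff_adj.mp h)
    omega
  obtain ⟨m, -, huniq⟩ := hμ x y
  have hmed : ∀ z : V, G.Adj z x → G.Adj z y → G.dist μ z + 1 = G.dist μ x →
      IsMedianPt G μ x y z := by
    intro z hzx hzy hz
    rw [isMedianPt_iff hconn]
    have h1 : G.dist z x = 1 := SimpleGraph.dist_eq_one_iff_adj.mpr hzx
    have h2 : G.dist z y = 1 := SimpleGraph.dist_eq_one_iff_adj.mpr hzy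
    have h1' : G.dist x z = 1 := SimpleGraph.dist_eq_one_iff_adj.mpr hzx.symm
    refine ⟨by omega, by omega, by omega⟩
  exact hcc ((huniq c (hmed c hcx hcy hdc)).trans (huniq c' (hmed c' hcx' hcy' hdc')).symm)

lemma medico_core {V : Type*} {G : SimpleGraph V} (hconn : G.Connected) {μ : V}
    (hμ : Medico G μ) (a b : Fin 3 → V)
    (hab : ∀ i j, G.Adj (a i) (b j))
    (haa : ∀ i i' : Fin 3, i ≠ i' → ¬ G.Adj (a i) (a i') ∧ a i ≠ a i')
    (hbb : ∀ j j' : Fin 3, j ≠ j' → ¬ G.Adj (b j) (b j') ∧ b j ≠ b j')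
    (he : ∀ j j' : Fin 3, G.dist μ (b j) = G.dist μ (b j')) : False := by
  have hstep : ∀ i : Fin 3, G.dist μ (a i) + 1 = G.dist μ (b 0) ∨
      G.dist μ (b 0) + 1 = G.dist μ (a i) := fun i => medico_step hconn hμ (hab i 0)
  have hpair : ∃ i i' : Fin 3, i ≠ i' ∧ G.dist μ (a i) = G.dist μ (a i') := by
    rcases hstep 0 with h0 | h0 <;> rcases hstep 1 with h1 | h1 <;>
      rcases hstep 2 with h2 | h2 <;>
      first
        | exact ⟨0, 1, by decide, by omega⟩
        | exact ⟨0, 2, by decide, by omega⟩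
        | exact ⟨1, 2, by decide, by omega⟩
  obtain ⟨i, i', hii, heq⟩ := hpair
  rcases hstep i with h | h
  · -- a's are one below the b level: a i, a i' are two medians for (b 0, b 1)
    exact medico_key hconn hμ (haa i i' hii).2 (hbb 0 1 (by decide)).1 (hbb 0 1 (by decide)).2
      (hab i 0) (hab i 1) (hab i' 0) (hab i' 1) h (by omega) (he 0 1)
  · -- b's one below a level: b 0, b 1 are two medians for (a i, a i')
    exact medico_key hconn hμ (hbb 0 1 (by decide)).2 (haa i i' hii).1 (haa i i' hii).2
      (hab i 0).symm (hab i' 0).symm (hab i 1).symm (hab i' 1).symm (by omega)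
      (by have := he 0 1; omega) heq


/-- A finite connected graph with at least one median-consistent vertex
contains no induced `K_{3,3}`. -/
theorem stmt4 {V : Type*} [Fintype V] (G : SimpleGraph V) (hconn : G.Connected)
    (hμ : ∃ μ : V, Medico G μ) :
    ¬ HasInducedCopy (completeBipartiteGraph (Fin 3) (Fin 3)) G := by
  obtain ⟨μ, hμ⟩ := hμ
  rintro ⟨f, hf⟩
  set a : Fin 3 → V := fun i => f (Sum.inl i) with ha
  set b : Fin 3 → V := fun j => f (Sum.inr j) with hb
  have hab : ∀ i j, G.Adj (a i) (b j) := by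
    intro i j; rw [← hf]; simp
  have haa : ∀ i i' : Fin 3, i ≠ i' → ¬ G.Adj (a i) (a i') ∧ a i ≠ a i' := by
    intro i i' h
    refine ⟨by rw [← hf]; simp, fun hc => h (by simpa using f.injective hc)⟩
  have hbb : ∀ j j' : Fin 3, j ≠ j' → ¬ G.Adj (b j) (b j') ∧ b j ≠ b j' := by
    intro j j' h
    refine ⟨by rw [← hf]; simp, fun hc => h (by simpa using f.injective hc)⟩
  -- all distances from μ to the a side equal, or to the b side equal
  have hstep : ∀ i j, G.dist μ (a i) + 1 = G.dist μ (b j) ∨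
      G.dist μ (b j) + 1 = G.dist μ (a i) := fun i j => medico_step hconn hμ (hab i j)
  by_cases hbeq : ∀ j j' : Fin 3, G.dist μ (b j) = G.dist μ (b j')
  · exact medico_core hconn hμ a b hab haa hbb hbeq
  · push_neg at hbeq
    obtain ⟨j, j', hjj⟩ := hbeq
    have haeq : ∀ i i' : Fin 3, G.dist μ (a i) = G.dist μ (a i') := by
      intro i i'
      have h1 := hstep i j
      have h2 := hstep i j'
      have h3 := hstep i' j
      have h4 := hstep i' j'
      omega
    exact medico_core hconn hμ b a (fun j i => (hab i j).symm)
      hbb haa haeq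
end

section
/- Let G be a finite simple connected graph with at least one median-consistent vertex. Then G contains no convex cycle of length greater than 4, i.e., no cycle C with |C| > 4 is a convex subgraph of G. -/
open SimpleGraph

/-- If `z` is on a shortest `u`-`v` path, the distances through `z` add up. -/
lemma onShortestPath_dist_add {V : Type*} {G : SimpleGraph V} (hconn : G.Connected)
    {u v z : V} (h : OnShortestPath G u v z) :
    G.dist u z + G.dist z v = G.dist u v := by
  classical
  obtain ⟨p, hl, hz⟩ := h
  have h1 : G.dist u z ≤ (p.takeUntil z hz).length := SimpleGraph.dist_le _
  have h2 : G.dist z v ≤ (p.dropUntil z hz).length := SimpleGraph.dist_le _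
  have h3 : (p.takeUntil z hz).length + (p.dropUntil z hz).length = p.length := by
    rw [← SimpleGraph.Walk.length_append, p.take_spec hz]
  have h4 := hconn.dist_triangle (u := u) (v := z) (w := v)
  omega

/-- A finite connected graph with at least one medico vertex contains no
convex cycle of length greater than 4: for every cycle `c : ZMod n → V` with `n > 4`,
it is not the case that every shortest path of `G` between two cycle vertices is
contained in the cycle (all its vertices being cycle vertices and all its edges being
cycle edges). -/
theorem stmt7 {V : Type*} [Fintype V] (G : SimpleGraph V) (hconn : G.Connected)
    (hμ : ∃ μ : V, Medico G μ)
    (n : ℕ) (hn : 4 < n) (c : ZMod n → V)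
    (hinj : Function.Injective c)
    (hadj : ∀ i : ZMod n, G.Adj (c i) (c (i + 1))) :
    ¬ (∀ (a b : ZMod n) (p : G.Walk (c a) (c b)), p.length = G.dist (c a) (c b) →
        (∀ x ∈ p.support, ∃ i : ZMod n, x = c i) ∧
        (∀ e ∈ p.edges, ∃ i : ZMod n, e = s(c i, c (i + 1)))) := by
  intro hconv
  obtain ⟨μ, hμ⟩ := hμ
  haveI : NeZero n := ⟨by omega⟩
  -- small natural numbers are nonzero in ZMod n
  have hz : ∀ k : ℕ, 0 < k → k < n → ((k : ZMod n) ≠ 0) := by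
    intro k hk1 hk2 h
    rw [ZMod.natCast_eq_zero_iff] at h
    have := Nat.le_of_dvd hk1 h
    omega
  have hne : ∀ a b : ZMod n, a ≠ b → c a ≠ c b := fun a b h hc => h (hinj hc)
  -- adjacency between cycle vertices only along cycle edges
  have hA : ∀ a b : ZMod n, G.Adj (c a) (c b) → b = a + 1 ∨ a = b + 1 := by
    intro a b hab
    have hd : G.dist (c a) (c b) = 1 := SimpleGraph.dist_eq_one_iff_adj.mpr hab
    have hp : (SimpleGraph.Walk.cons hab SimpleGraph.Walk.nil).length
        = G.dist (c a) (c b) := by simp [hd]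
    obtain ⟨-, he⟩ := hconv a b _ hp
    obtain ⟨i, hi⟩ := he s(c a, c b) (by simp)
    rw [Sym2.eq_iff] at hi
    rcases hi with ⟨h1, h2⟩ | ⟨h1, h2⟩
    · left; rw [hinj h2, hinj h1]
    · right; rw [hinj h1, hinj h2]
  -- vertices two apart on the cycle are at distance 2
  have hB : ∀ j : ZMod n, G.dist (c (j - 1)) (c (j + 1)) = 2 := by
    intro j
    have e1 : G.Adj (c (j - 1)) (c j) := by
      have := hadj (j - 1); rwa [sub_add_cancel] at this
    have e2 : G.Adj (c j) (c (j + 1)) := hadj j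
    have hle : G.dist (c (j - 1)) (c (j + 1)) ≤ 2 := by
      have := SimpleGraph.dist_le
        (SimpleGraph.Walk.cons e1 (SimpleGraph.Walk.cons e2 SimpleGraph.Walk.nil))
      simpa using this
    have hne0 : G.dist (c (j - 1)) (c (j + 1)) ≠ 0 := by
      intro h
      have := (hconn.dist_eq_zero_iff).mp h
      apply hne (j - 1) (j + 1) _ this
      intro h'
      have : (2 : ZMod n) = 0 := by linear_combination -h'
      exact hz 2 (by norm_num) (by omega) (by exact_mod_cast this)
    have hne1 : G.dist (c (j - 1)) (c (j + 1)) ≠ 1 := by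
      intro h
      have hadj' : G.Adj (c (j - 1)) (c (j + 1)) := SimpleGraph.dist_eq_one_iff_adj.mp h
      rcases hA _ _ hadj' with h' | h'
      · have : (1 : ZMod n) = 0 := by linear_combination h'
        exact hz 1 (by norm_num) (by omega) (by exact_mod_cast this)
      · have : (3 : ZMod n) = 0 := by linear_combination -h'
        exact hz 3 (by norm_num) (by omega) (by exact_mod_cast this)
    omega
  -- choose j maximizing the distance to μ
  obtain ⟨j, hj⟩ := Finite.exists_max (fun i : ZMod n => G.dist μ (c i))
  -- get the median of (μ, c (j-1), c (j+1))
  obtain ⟨m, ⟨hm1, hm2, hm3⟩, -⟩ := hμ (c (j - 1)) (c (j + 1))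
  -- m lies on a shortest path between c (j-1) and c (j+1), so m ∈ {c (j-1), c j, c (j+1)}
  have hmI : m = c (j - 1) ∨ m = c j ∨ m = c (j + 1) := by
    obtain ⟨p, hpl, hmp⟩ := hm3
    obtain ⟨l, hl⟩ := (hconv _ _ p hpl).1 m hmp
    have hsum : G.dist (c (j - 1)) m + G.dist m (c (j + 1)) = 2 := by
      have := onShortestPath_dist_add hconn ⟨p, hpl, hmp⟩
      rw [hB j] at this; exact this
    rcases Nat.lt_or_ge (G.dist (c (j - 1)) m) 1 with h0 | h1
    · left
      have : G.dist (c (j - 1)) m = 0 := by omega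
      exact ((hconn.dist_eq_zero_iff).mp this).symm
    rcases Nat.lt_or_ge (G.dist m (c (j + 1))) 1 with h0' | h1'
    · right; right
      have : G.dist m (c (j + 1)) = 0 := by omega
      exact (hconn.dist_eq_zero_iff).mp this
    -- both distances are 1
    have d1 : G.dist (c (j - 1)) m = 1 := by omega
    have d2 : G.dist m (c (j + 1)) = 1 := by omega
    subst hl
    have a1 : G.Adj (c (j - 1)) (c l) := SimpleGraph.dist_eq_one_iff_adj.mp d1
    have a2 : G.Adj (c l) (c (j + 1)) := SimpleGraph.dist_eq_one_iff_adj.mp d2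
    rcases hA _ _ a1 with h' | h' <;> rcases hA _ _ a2 with h'' | h''
    · right; left
      rw [h']; congr 1; ring
    · exfalso
      have : (2 : ZMod n) = 0 := by linear_combination h' - h''
      exact hz 2 (by norm_num) (by omega) (by exact_mod_cast this)
    · exfalso
      have : (2 : ZMod n) = 0 := by linear_combination h'' - h'
      exact hz 2 (by norm_num) (by omega) (by exact_mod_cast this)
    · exfalso
      have : (4 : ZMod n) = 0 := by linear_combination -h' - h''
      exact hz 4 (by norm_num) (by omega) (by exact_mod_cast this)
  -- distance relations from the median property
  have e1 : G.dist μ m + G.dist m (c (j - 1)) = G.dist μ (c (j - 1)) :=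
    onShortestPath_dist_add hconn hm1
  have e2 : G.dist μ m + G.dist m (c (j + 1)) = G.dist μ (c (j + 1)) :=
    onShortestPath_dist_add hconn hm2
  have tmax1 : G.dist μ (c (j - 1)) ≤ G.dist μ (c j) := hj _
  have tmax2 : G.dist μ (c (j + 1)) ≤ G.dist μ (c j) := hj _
  have adj1 : G.Adj (c (j - 1)) (c j) := by
    have := hadj (j - 1); rwa [sub_add_cancel] at this
  have tri1 : G.dist μ (c j) ≤ G.dist μ (c (j - 1)) + 1 := by
    have h1 := hconn.dist_triangle (u := μ) (v := c (j - 1)) (w := c j)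
    have h2 : G.dist (c (j - 1)) (c j) = 1 := SimpleGraph.dist_eq_one_iff_adj.mpr adj1
    omega
  have tri2 : G.dist μ (c j) ≤ G.dist μ (c (j + 1)) + 1 := by
    have h1 := hconn.dist_triangle (u := μ) (v := c (j + 1)) (w := c j)
    have h2 : G.dist (c (j + 1)) (c j) = 1 :=
      SimpleGraph.dist_eq_one_iff_adj.mpr (hadj j).symm
    omega
  rcases hmI with hm | hm | hm
  · -- m = c (j - 1): then dist μ (c (j-1)) + 2 = dist μ (c (j+1))
    subst hm
    rw [(hconn.dist_eq_zero_iff).mpr rfl, add_zero] at e1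
    rw [e1, hB j] at e2
    omega
  · -- m = c j : then dist μ (c j) + 1 = dist μ (c (j-1)) ≤ dist μ (c j)
    subst hm
    have hd : G.dist (c j) (c (j - 1)) = 1 :=
      SimpleGraph.dist_eq_one_iff_adj.mpr adj1.symm
    rw [hd] at e1
    omega
  · -- m = c (j + 1)
    subst hm
    rw [(hconn.dist_eq_zero_iff).mpr rfl, add_zero] at e2
    have hB' : G.dist (c (j + 1)) (c (j - 1)) = 2 := by
      rw [SimpleGraph.dist_comm]; exact hB j
    rw [e2, hB'] at e1
    omega
end

section
/- Let G be a finite simple connected graph and μ ∈ V(G). Then μ is a median-consistent vertex of G if and only if μ is a median-consistent vertex of every μ-convex subgraph H of G (where median-consistency of μ in H means |I_H(μ,v,w)| = 1 for all v,w ∈ V(H)). -/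
/-!
If `H` is `μ`-convex and `v, w ∈ V(H)`, then shortest `G`-paths from `μ` to `v` and to `w`
through the `G`-median `m` lie in `H`, and so does the shortest `v`–`w` path obtained by
gluing their tails at `m`. Hence `H` realises the `G`-distances of the three pairs, so
`I_H(μ, v, w) ⊆ I_G(μ, v, w) = {m}` while `m ∈ I_H(μ, v, w)`. Conversely, `G` itself is
`μ`-convex, and intervals of `⊤ : G.Subgraph` are those of `G`.
-/

open SimpleGraph

/-- A subgraph `H` of `G` is `v`-convex: `v ∈ V(H)` and every shortest path in `G`
connecting `v` and a vertex `x` of `H` is contained in `H`. -/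
def VConvex {V : Type*} (G : SimpleGraph V) (H : G.Subgraph) (v : V) : Prop :=
  v ∈ H.verts ∧
    ∀ x ∈ H.verts, ∀ p : G.Walk v x, p.length = G.dist v x → p.toSubgraph ≤ H

namespace SimpleGraph

variable {V W : Type*} {G : SimpleGraph V} {G' : SimpleGraph W}

lemma Walk.length_takeUntil_add_length_dropUntil [DecidableEq V] {u v m : V} (p : G.Walk u v)
    (hm : m ∈ p.support) : (p.takeUntil m hm).length + (p.dropUntil m hm).length = p.length := by
  rw [← Walk.length_append, p.take_spec hm]

lemma Walk.toSubgraph_dropUntil_le [DecidableEq V] {u v m : V} (p : G.Walk u v)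
    (hm : m ∈ p.support) : (p.dropUntil m hm).toSubgraph ≤ p.toSubgraph := by
  conv_rhs => rw [← p.take_spec hm, Walk.toSubgraph_append]
  exact le_sup_right

lemma Walk.length_dropUntil_eq_dist [DecidableEq V] {u v m : V} {p : G.Walk u v}
    (hp : p.length = G.dist u v) (hm : m ∈ p.support) :
    (p.dropUntil m hm).length = G.dist m v := by
  have := p.length_takeUntil_add_length_dropUntil hm
  have := dist_le (p.takeUntil m hm)
  have := dist_le (p.dropUntil m hm)
  have := (p.takeUntil m hm).reachable.dist_triangle_left v
  omega

lemma Hom.dist_map_le (f : G →g G') {u v : V} (h : G.Reachable u v) :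
    G'.dist (f u) (f v) ≤ G.dist u v := by
  obtain ⟨p, hp⟩ := h.exists_walk_length_eq_dist
  rw [← hp, ← p.length_map f]
  exact dist_le _

namespace Subgraph

variable {H : G.Subgraph}

lemma exists_walk_coe_map_hom_eq {a b : V} (p : G.Walk a b) (hH : p.toSubgraph ≤ H)
    (ha : a ∈ H.verts) (hb : b ∈ H.verts) : ∃ q : H.coe.Walk ⟨a, ha⟩ ⟨b, hb⟩, q.map H.hom = p :=
  ⟨p.mapToSubgraph.map (inclusion hH), (Walk.map_map _ _ _).trans p.map_mapToSubgraph_hom⟩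

lemma dist_coe_eq_of_toSubgraph_le {a b : V} {p : G.Walk a b} (hp : p.length = G.dist a b)
    (hH : p.toSubgraph ≤ H) (ha : a ∈ H.verts) (hb : b ∈ H.verts) :
    H.coe.dist ⟨a, ha⟩ ⟨b, hb⟩ = G.dist a b := by
  obtain ⟨q, rfl⟩ := exists_walk_coe_map_hom_eq p hH ha hb
  have hq : q.length = G.dist a b := (q.length_map H.hom).symm.trans hp
  exact le_antisymm (hq ▸ dist_le q) (H.hom.dist_map_le q.reachable)

end Subgraph

end SimpleGraph

section

variable {V W : Type*} {G : SimpleGraph V} {G' : SimpleGraph W}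

lemma OnShortestPath.map {u v z : V} (h : OnShortestPath G u v z) (f : G →g G')
    (hd : G'.dist (f u) (f v) = G.dist u v) : OnShortestPath G' (f u) (f v) (f z) := by
  obtain ⟨p, hp, hz⟩ := h
  exact ⟨p.map f, by rw [Walk.length_map, hp, hd],
    by rw [Walk.support_map]; exact List.mem_map_of_mem hz⟩

lemma OnShortestPath.reachable {u v z : V} (h : OnShortestPath G u v z) : G.Reachable u v :=
  h.elim fun p _ => p.reachable

lemma OnShortestPath.dist_add_dist [DecidableEq V] {u v z : V} (h : OnShortestPath G u v z) :
    G.dist u z + G.dist z v = G.dist u v := by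
  obtain ⟨p, hp, hz⟩ := h
  have := p.length_takeUntil_add_length_dropUntil hz
  have := dist_le (p.takeUntil z hz)
  have := dist_le (p.dropUntil z hz)
  have := (p.takeUntil z hz).reachable.dist_triangle_left v
  omega

lemma onShortestPath_coe_of_toSubgraph_le {H : G.Subgraph} {a b z : V} {p : G.Walk a b}
    (hp : p.length = G.dist a b) (hH : p.toSubgraph ≤ H) (hz : z ∈ p.support)
    (ha : a ∈ H.verts) (hb : b ∈ H.verts) (hzH : z ∈ H.verts) :
    OnShortestPath H.coe ⟨a, ha⟩ ⟨b, hb⟩ ⟨z, hzH⟩ := by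
  obtain ⟨q, rfl⟩ := Subgraph.exists_walk_coe_map_hom_eq p hH ha hb
  refine ⟨q, ?_, ?_⟩
  · rw [Subgraph.dist_coe_eq_of_toSubgraph_le hp hH, ← hp]
    exact (q.length_map H.hom).symm
  · obtain ⟨z', hz', rfl⟩ := List.mem_map.1 ((congrArg (z ∈ ·) (q.support_map H.hom)).mp hz)
    exact hz'

lemma exists_shortest_walk_le_sup [DecidableEq V] {μ v w m : V} {p₁ : G.Walk μ v}
    {p₂ : G.Walk μ w} (h₁ : p₁.length = G.dist μ v) (h₂ : p₂.length = G.dist μ w)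
    (hm₁ : m ∈ p₁.support) (hm₂ : m ∈ p₂.support) (hm : OnShortestPath G v w m) :
    ∃ q : G.Walk v w, q.length = G.dist v w ∧ m ∈ q.support ∧
      q.toSubgraph ≤ p₁.toSubgraph ⊔ p₂.toSubgraph := by
  refine ⟨(p₁.dropUntil m hm₁).reverse.append (p₂.dropUntil m hm₂), ?_, ?_, ?_⟩
  · rw [Walk.length_append, Walk.length_reverse, Walk.length_dropUntil_eq_dist h₁,
      Walk.length_dropUntil_eq_dist h₂, G.dist_comm, hm.dist_add_dist]
  · exact (Walk.mem_support_append_iff _ _).2 (Or.inr (Walk.start_mem_support _))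
  · rw [Walk.toSubgraph_append, Walk.toSubgraph_reverse]
    exact sup_le_sup (p₁.toSubgraph_dropUntil_le hm₁) (p₂.toSubgraph_dropUntil_le hm₂)

theorem Medico.coe_of_vConvex {μ : V} (hG : Medico G μ) {H : G.Subgraph}
    (hH : VConvex G H μ) : Medico H.coe ⟨μ, hH.1⟩ := by
  classical
  intro v w
  obtain ⟨m, ⟨⟨p₁, h₁, hm₁⟩, ⟨p₂, h₂, hm₂⟩, hm₃⟩, huniq⟩ := hG v w
  have hp₁ := hH.2 v v.2 p₁ h₁
  have hp₂ := hH.2 w w.2 p₂ h₂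
  obtain ⟨q, hq, hmq, hqp⟩ := exists_shortest_walk_le_sup h₁ h₂ hm₁ hm₂ hm₃
  have hqH : q.toSubgraph ≤ H := hqp.trans (sup_le hp₁ hp₂)
  have hmH : m ∈ H.verts := hp₁.1 (p₁.mem_verts_toSubgraph.2 hm₁)
  refine ⟨⟨m, hmH⟩, ⟨onShortestPath_coe_of_toSubgraph_le h₁ hp₁ hm₁ hH.1 v.2 hmH,
    onShortestPath_coe_of_toSubgraph_le h₂ hp₂ hm₂ hH.1 w.2 hmH,
    onShortestPath_coe_of_toSubgraph_le hq hqH hmq v.2 w.2 hmH⟩, ?_⟩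
  rintro m' ⟨h₁', h₂', h₃'⟩
  exact Subtype.ext <| huniq m'
    ⟨h₁'.map H.hom (Subgraph.dist_coe_eq_of_toSubgraph_le h₁ hp₁ hH.1 v.2).symm,
      h₂'.map H.hom (Subgraph.dist_coe_eq_of_toSubgraph_le h₂ hp₂ hH.1 w.2).symm,
      h₃'.map H.hom (Subgraph.dist_coe_eq_of_toSubgraph_le hq hqH v.2 w.2).symm⟩

lemma onShortestPath_top_coe_iff {x y z : (⊤ : G.Subgraph).verts} :
    OnShortestPath (⊤ : G.Subgraph).coe x y z ↔ OnShortestPath G x y z := by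
  refine ⟨fun h => ?_, fun ⟨p, hp, hz⟩ => onShortestPath_coe_of_toSubgraph_le hp le_top hz _ _ _⟩
  obtain ⟨r, hr⟩ := (h.reachable.map (⊤ : G.Subgraph).hom).exists_walk_length_eq_dist
  exact h.map _ (Subgraph.dist_coe_eq_of_toSubgraph_le hr le_top x.2 y.2).symm

theorem Medico.of_top_coe {μ : V} (h : Medico (⊤ : G.Subgraph).coe ⟨μ, trivial⟩) :
    Medico G μ := by
  intro v w
  obtain ⟨m, hm, huniq⟩ := h ⟨v, trivial⟩ ⟨w, trivial⟩
  simp only [IsMedianPt, onShortestPath_top_coe_iff] at hm huniq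
  exact ⟨m, hm, fun m' hm' => congrArg Subtype.val (huniq ⟨m', trivial⟩ hm')⟩

end

theorem stmt14_general {V : Type*} (G : SimpleGraph V)
    (μ : V) :
    Medico G μ ↔
      ∀ (H : G.Subgraph) (hH : VConvex G H μ),
        ∀ v w : H.verts, ∃! m : H.verts, IsMedianPt H.coe ⟨μ, hH.1⟩ v w m :=
  ⟨fun hG _ hH => hG.coe_of_vConvex hH,
    fun h => Medico.of_top_coe (h ⊤ ⟨trivial, fun _ _ _ _ => le_top⟩)⟩

/-- A vertex `μ` of a finite connected graph `G` is a medico vertex of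
`G` iff `μ` is a medico vertex of every `μ`-convex subgraph `H` of `G` (median
consistency in `H` being taken with respect to the intervals of `H`). -/
theorem stmt14 {V : Type*} [Fintype V] (G : SimpleGraph V) (hconn : G.Connected)
    (μ : V) :
    Medico G μ ↔
      ∀ (H : G.Subgraph) (hH : VConvex G H μ),
        ∀ v w : H.verts, ∃! m : H.verts, IsMedianPt H.coe ⟨μ, hH.1⟩ v w m :=
  stmt14_general G μ
end

section
/- Let G be a finite simple graph and μ ∈ V(G). Then μ is a median-consistent vertex of G if and only if G is connected, bipartite, and satisfies conditions (C0) and (C2) with respect to μ. Consequently, G is a k-median graph if and only if G is connected, bipartite and satisfies (C0) and (C2) with respect to k distinct vertices μ_1, …, μ_k, and in that case μ_1, …, μ_k are median-consistent vertices of G. -/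
open SimpleGraph

/-- Condition (C0) with respect to `u`: for all vertices `v, w`,
`I(u,v) ∩ I(v,w) = {v}` implies `v ∈ I(u,w)`. -/
def SatC0 {V : Type*} (G : SimpleGraph V) (u : V) : Prop :=
  ∀ v w : V,
    {m : V | OnShortestPath G u v m ∧ OnShortestPath G v w m} = {v} →
      OnShortestPath G u w v

/-- Condition (C2) with respect to `u`: for all vertices `v, w`, whenever `I(u,v,w)`
contains more than one vertex, the subgraph induced by `I(u,v,w)` contains an edge. -/
def SatC2 {V : Type*} (G : SimpleGraph V) (u : V) : Prop :=
  ∀ v w : V,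
    (∃ a b : V, IsMedianPt G u v w a ∧ IsMedianPt G u v w b ∧ a ≠ b) →
      ∃ a b : V, IsMedianPt G u v w a ∧ IsMedianPt G u v w b ∧ G.Adj a b

/-- In a connected graph, `z` lies on a shortest `u`–`v` path iff the distances add up. -/
lemma onsp_iff {V : Type*} {G : SimpleGraph V} (hc : G.Connected) (u v z : V) :
    OnShortestPath G u v z ↔ G.dist u z + G.dist z v = G.dist u v := by
  classical
  constructor
  · rintro ⟨p, hlen, hz⟩
    have h1 : G.dist u z ≤ (p.takeUntil z hz).length := SimpleGraph.dist_le _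
    have h2 : G.dist z v ≤ (p.dropUntil z hz).length := SimpleGraph.dist_le _
    have h3 : (p.takeUntil z hz).length + (p.dropUntil z hz).length = p.length := by
      conv_rhs => rw [← p.take_spec hz]
      rw [SimpleGraph.Walk.length_append]
    have h4 : G.dist u v ≤ G.dist u z + G.dist z v := hc.dist_triangle
    omega
  · intro h
    obtain ⟨q, hq⟩ := hc.exists_walk_length_eq_dist u z
    obtain ⟨r, hr⟩ := hc.exists_walk_length_eq_dist z v
    exact ⟨q.append r, by rw [SimpleGraph.Walk.length_append, hq, hr, h],
      by rw [SimpleGraph.Walk.mem_support_append_iff]; exact Or.inl q.end_mem_support⟩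

/-- In a 2-colorable graph, any two walks between the same endpoints have the same
parity of length. -/
lemma walk_parity {V : Type*} {G : SimpleGraph V} (hb : G.Colorable 2)
    {x y : V} (p q : G.Walk x y) : p.length % 2 = q.length % 2 := by
  obtain ⟨C⟩ := hb
  set c : V → ZMod 2 := fun v => ((C v).val : ZMod 2) with hc
  have hdiff : ∀ {a b : V}, G.Adj a b → c b = c a + 1 := by
    intro a b hab
    have h := C.valid hab
    have hv : (C a).val ≠ (C b).val := fun h' => h (Fin.ext h')
    have ha := (C a).isLt
    have hb2 := (C b).isLt
    have : (C a).val = 0 ∧ (C b).val = 1 ∨ (C a).val = 1 ∧ (C b).val = 0 := by omega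
    rcases this with ⟨h1, h2⟩ | ⟨h1, h2⟩ <;> simp [hc, h1, h2] <;> decide
  have key : ∀ {x y : V} (p : G.Walk x y), c y = c x + (p.length : ZMod 2) := by
    intro x y p
    induction p with
    | nil => simp
    | cons h p ih =>
      rw [SimpleGraph.Walk.length_cons, ih, hdiff h]
      push_cast
      ring
  have h2 : (p.length : ZMod 2) = (q.length : ZMod 2) :=
    add_left_cancel ((key p).symm.trans (key q))
  exact (ZMod.natCast_eq_natCast_iff' _ _ _).mp h2

/-- Distance to adjacent vertices differs by at most one. -/
lemma dist_adj_le {V : Type*} {G : SimpleGraph V} (hc : G.Connected) {μ a b : V}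
    (hab : G.Adj a b) : G.dist μ b ≤ G.dist μ a + 1 := by
  obtain ⟨q, hq⟩ := hc.exists_walk_length_eq_dist μ a
  calc G.dist μ b ≤ (q.concat hab).length := SimpleGraph.dist_le _
    _ = G.dist μ a + 1 := by rw [SimpleGraph.Walk.length_concat, hq]

/-- In a connected bipartite graph, distances to adjacent vertices differ by exactly 1. -/
lemma adj_dist {V : Type*} {G : SimpleGraph V} (hc : G.Connected) (hb : G.Colorable 2)
    {μ a b : V} (hab : G.Adj a b) :
    G.dist μ b = G.dist μ a + 1 ∨ G.dist μ a = G.dist μ b + 1 := by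
  obtain ⟨q, hq⟩ := hc.exists_walk_length_eq_dist μ a
  obtain ⟨r, hr⟩ := hc.exists_walk_length_eq_dist μ b
  have hpar := walk_parity hb (q.concat hab) r
  rw [SimpleGraph.Walk.length_concat, hq, hr] at hpar
  have h1 := dist_adj_le hc hab (μ := μ)
  have h2 := dist_adj_le hc hab.symm (μ := μ)
  omega

/-- For a finite graph `G`: a vertex `μ` is medico iff `G` is
connected, bipartite and satisfies (C0) and (C2) with respect to `μ`.  Consequently, for
`k ≥ 1`, `G` has at least `k` medico vertices iff `G` is connected, bipartite and
satisfies (C0) and (C2) with respect to `k` distinct vertices (which then are medico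
vertices of `G`). -/
theorem stmt17 {V : Type*} [Fintype V] (G : SimpleGraph V) :
    (∀ μ : V, Medico G μ ↔
      (G.Connected ∧ G.Colorable 2 ∧ SatC0 G μ ∧ SatC2 G μ)) ∧
    (∀ k : ℕ, 1 ≤ k →
      ((∃ S : Finset V, k ≤ S.card ∧ ∀ μ ∈ S, Medico G μ) ↔
        (G.Connected ∧ G.Colorable 2 ∧
          ∃ S : Finset V, k ≤ S.card ∧ ∀ μ ∈ S, SatC0 G μ ∧ SatC2 G μ))) := by
  classical
  have main : ∀ μ : V, Medico G μ ↔
      (G.Connected ∧ G.Colorable 2 ∧ SatC0 G μ ∧ SatC2 G μ) := by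
    intro μ
    constructor
    · intro hm
      have reach : ∀ x : V, G.Reachable μ x := by
        intro x
        obtain ⟨m, ⟨⟨p, _, _⟩, _, _⟩, _⟩ := hm x x
        exact ⟨p⟩
      have hconn : G.Connected := by
        rw [connected_iff]
        exact ⟨fun x y => (reach x).symm.trans (reach y), ⟨μ⟩⟩
      have hedge : ∀ {x y : V}, G.Adj x y → G.dist μ x ≠ G.dist μ y := by
        intro x y hxy h
        obtain ⟨m, ⟨h1, h2, h3⟩, _⟩ := hm x y
        rw [onsp_iff hconn] at h1 h2 h3
        have hxy1 : G.dist x y = 1 := SimpleGraph.dist_eq_one_iff_adj.mpr hxy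
        rw [hxy1] at h3
        have : G.dist x m = 0 ∨ G.dist m y = 0 := by omega
        rcases this with h0 | h0
        · obtain rfl : x = m := hconn.dist_eq_zero_iff.mp h0
          omega
        · obtain rfl : m = y := hconn.dist_eq_zero_iff.mp h0
          have hcm : G.dist m x = G.dist x m := SimpleGraph.dist_comm ..
          omega
      refine ⟨hconn, ?_, ?_, ?_⟩
      · refine ⟨SimpleGraph.Coloring.mk
          (fun x => (⟨G.dist μ x % 2, Nat.mod_lt _ two_pos⟩ : Fin 2)) ?_⟩
        intro x y hxy h
        have hne := hedge hxy
        have h1 := dist_adj_le hconn hxy (μ := μ)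
        have h2 := dist_adj_le hconn hxy.symm (μ := μ)
        have : G.dist μ x % 2 = G.dist μ y % 2 := congrArg Fin.val h
        omega
      · intro v w hset
        obtain ⟨m, ⟨h1, h2, h3⟩, _⟩ := hm v w
        have hmem : m ∈ {m : V | OnShortestPath G μ v m ∧ OnShortestPath G v w m} :=
          ⟨h1, h3⟩
        rw [hset] at hmem
        rw [Set.mem_singleton_iff] at hmem
        subst hmem
        exact h2
      · intro v w ⟨a, b, ha, hb, hne⟩
        obtain ⟨m, _, hu⟩ := hm v w
        exact absurd ((hu a ha).trans (hu b hb).symm) hne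
    · rintro ⟨hconn, hbip, h0, h2⟩ v w
      -- existence
      set S : Finset V := Finset.univ.filter
        (fun m => G.dist μ m + G.dist m v = G.dist μ v ∧
          G.dist v m + G.dist m w = G.dist v w) with hS
      have hvS : v ∈ S := by
        simp [hS, SimpleGraph.dist_self]
      obtain ⟨m, hmS, hmax⟩ := S.exists_max_image (fun m => G.dist v m) ⟨v, hvS⟩
      rw [hS, Finset.mem_filter] at hmS
      obtain ⟨-, hm1, hm2⟩ := hmS
      have hsingle : {x : V | OnShortestPath G μ m x ∧ OnShortestPath G m w x} = {m} := by
        ext x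
        simp only [Set.mem_setOf_eq, Set.mem_singleton_iff, onsp_iff hconn]
        constructor
        · rintro ⟨e1, e2⟩
          have t1 : G.dist μ v ≤ G.dist μ x + G.dist x v := hconn.dist_triangle
          have t2 : G.dist x v ≤ G.dist x m + G.dist m v := hconn.dist_triangle
          have t3 : G.dist v w ≤ G.dist v x + G.dist x w := hconn.dist_triangle
          have t4 : G.dist v x ≤ G.dist v m + G.dist m x := hconn.dist_triangle
          have c1 : G.dist x v = G.dist v x := SimpleGraph.dist_comm ..
          have c2 : G.dist x m = G.dist m x := SimpleGraph.dist_comm ..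
          have hxS : x ∈ S := by
            rw [hS, Finset.mem_filter]
            exact ⟨Finset.mem_univ _, by omega, by omega⟩
          have hle := hmax x hxS
          have : G.dist m x = 0 := by omega
          exact (hconn.dist_eq_zero_iff.mp this).symm
        · rintro rfl
          simp [SimpleGraph.dist_self]
      have hmw : G.dist μ m + G.dist m w = G.dist μ w :=
        (onsp_iff hconn μ w m).mp (h0 m w hsingle)
      have hmed : IsMedianPt G μ v w m := by
        refine ⟨?_, ?_, ?_⟩ <;> rw [onsp_iff hconn]
        · exact hm1
        · exact hmw
        · exact hm2
      -- uniqueness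
      have uniq : ∀ a b : V, IsMedianPt G μ v w a → IsMedianPt G μ v w b → a = b := by
        intro a b ha hb
        by_contra hne
        obtain ⟨a', b', ha', hb', hadj⟩ := h2 v w ⟨a, b, ha, hb, hne⟩
        obtain ⟨ha1, ha2, ha3⟩ := ha'
        obtain ⟨hb1, hb2, hb3⟩ := hb'
        rw [onsp_iff hconn] at ha1 ha2 ha3 hb1 hb2 hb3
        have hd := adj_dist hconn hbip hadj (μ := μ)
        have c1 : G.dist a' v = G.dist v a' := SimpleGraph.dist_comm ..
        have c2 : G.dist b' v = G.dist v b' := SimpleGraph.dist_comm ..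
        have c3 : G.dist a' w = G.dist w a' := SimpleGraph.dist_comm ..
        have c4 : G.dist b' w = G.dist w b' := SimpleGraph.dist_comm ..
        omega
      exact ⟨m, hmed, fun y hy => uniq y m hy hmed⟩
  refine ⟨main, fun k hk => ⟨?_, ?_⟩⟩
  · rintro ⟨S, hcard, hmed⟩
    have hSne : S.Nonempty := Finset.card_pos.mp (lt_of_lt_of_le hk hcard)
    obtain ⟨μ₀, hμ₀⟩ := hSne
    obtain ⟨hc, hb, -, -⟩ := (main μ₀).mp (hmed μ₀ hμ₀)
    exact ⟨hc, hb, S, hcard, fun μ hμ => ((main μ).mp (hmed μ hμ)).2.2⟩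
  · rintro ⟨hc, hb, S, hcard, h02⟩
    exact ⟨S, hcard, fun μ hμ => (main μ).mpr ⟨hc, hb, (h02 μ hμ).1, (h02 μ hμ).2⟩⟩
end
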